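/- arXiv:2603.02474 — 2 statements merged into one kernel-verified Lean document; each statement's English description precedes it below -/
import Mathlib

section
/- Suppose the covariate shift function is log-linear in Φ: w(x) = exp(a₀ + aᵀΦ(x)), with E[w(X)] = 1 and E[w(X)Φ(X)] = φ*. Then w coincides with the population entropy-balancing weight: w(x) = π_EB(x), where π_EB(x) = exp(λ₀ᵀ(Φ(x) − φ*)) / E[exp(λ₀ᵀ(Φ(X) − φ*))] with λ₀ = a satisfying E[(Φ(X) − φ*)·exp(λ₀ᵀ(Φ(X) − φ*))] = 0. Consequently μ_EB = E[π_EB(X)Y] = E[w(X)Y] = μ*. -/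
open MeasureTheory Real

/-! A log-linear shift `w = exp (a₀ + aᵀΦ)` differs from the unnormalised tilt
`exp (aᵀ(Φ - φ*))` only by the constant factor `C = exp (-(a₀ + aᵀφ*))`. Hence the
moment equation for the tilt is `C` times the centred moment `E[(Φ - φ*) w] = φ* - φ* · 1 = 0`,
its normaliser is `Z = C · E[w] = C`, and normalising the tilt gives back `w`. -/

theorem exp_sum_mul_sub_eq_mul_exp {ι : Type*} [Fintype ι] (a u v : ι → ℝ) (a0 : ℝ) :
    exp (∑ j, a j * (u j - v j)) =
      exp (a0 + ∑ j, a j * u j) * exp (-(a0 + ∑ j, a j * v j)) := by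
  rw [← exp_add]
  congr 1
  simp only [mul_sub, Finset.sum_sub_distrib]
  ring

theorem integral_sub_mul_eq_zero_of_integral_mul_eq {α : Type*} [MeasurableSpace α]
    {μ : Measure α} {f g : α → ℝ} {c : ℝ} (hf : ∫ x, f x ∂μ = 1)
    (hfg : ∫ x, f x * g x ∂μ = c) (hfg_int : Integrable (fun x => f x * g x) μ) :
    ∫ x, (g x - c) * f x ∂μ = 0 := by
  have hf_int : Integrable f μ := Integrable.of_integral_ne_zero (by rw [hf]; exact one_ne_zero)
  calc ∫ x, (g x - c) * f x ∂μ = ∫ x, f x * g x - c * f x ∂μ := by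
        congr 1 with x; ring
    _ = c - c * 1 := by
        rw [integral_sub hfg_int (hf_int.const_mul c), integral_const_mul, hfg, hf]
    _ = 0 := by ring

theorem eb_weight_eq_shift_of_loglinear_shift_general
    {Ω : Type*} [MeasurableSpace Ω] (μ : Measure Ω)
    {d K : ℕ} (X : Ω → Fin d → ℝ) (Y : Ω → ℝ)
    (Φ : (Fin d → ℝ) → Fin K → ℝ) (φstar : Fin K → ℝ)
    (w : (Fin d → ℝ) → ℝ) (a0 : ℝ) (a : Fin K → ℝ) (Z : ℝ)
    (hw : ∀ x, w x = Real.exp (a0 + ∑ k, a k * Φ x k))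
    (hw1 : ∫ ω, w (X ω) ∂μ = 1)
    (hwΦ : ∀ k, ∫ ω, w (X ω) * Φ (X ω) k ∂μ = φstar k)
    (hint : ∀ k, Integrable (fun ω => w (X ω) * Φ (X ω) k) μ)
    (hZ : Z = ∫ ω, Real.exp (∑ j, a j * (Φ (X ω) j - φstar j)) ∂μ)
    (πEB : (Fin d → ℝ) → ℝ)
    (hπ : ∀ x, πEB x = Real.exp (∑ j, a j * (Φ x j - φstar j)) / Z) :
    (∀ k, ∫ ω, (Φ (X ω) k - φstar k) *
        Real.exp (∑ j, a j * (Φ (X ω) j - φstar j)) ∂μ = 0) ∧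
    (∀ x, w x = πEB x) ∧
    ∫ ω, πEB (X ω) * Y ω ∂μ = ∫ ω, w (X ω) * Y ω ∂μ := by
  set C := exp (-(a0 + ∑ j, a j * φstar j))
  have htilt : ∀ x, exp (∑ j, a j * (Φ x j - φstar j)) = w x * C := fun x => by
    rw [hw, exp_sum_mul_sub_eq_mul_exp]
  have hZC : Z = C := by
    simp_rw [hZ, htilt, integral_mul_const, hw1, one_mul]
  have hmoment : ∀ k, ∫ ω, (Φ (X ω) k - φstar k) *
      exp (∑ j, a j * (Φ (X ω) j - φstar j)) ∂μ = 0 := fun k => by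
    simp_rw [htilt, ← mul_assoc, integral_mul_const,
      integral_sub_mul_eq_zero_of_integral_mul_eq hw1 (hwΦ k) (hint k), zero_mul]
  have hwπ : ∀ x, w x = πEB x := fun x => by
    rw [hπ, htilt, hZC, mul_div_cancel_right₀ _ (exp_ne_zero _)]
  exact ⟨hmoment, hwπ, by simp_rw [hwπ]⟩

/-- If the covariate shift function is log-linear in `Φ`,
`w(x) = exp(a₀ + aᵀΦ(x))`, with `E[w(X)] = 1` and `E[w(X)Φ(X)] = φ*`, then `w`
coincides with the population entropy-balancing weight with tilt `λ₀ = a`: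
the defining moment equation holds with `λ₀ = a`, `w = π_EB` pointwise, and
consequently `μ_EB = E[π_EB(X) Y] = E[w(X) Y] = μ*`. -/
theorem eb_weight_eq_shift_of_loglinear_shift
    {Ω : Type*} [MeasurableSpace Ω] (μ : Measure Ω) [IsProbabilityMeasure μ]
    {d K : ℕ} (X : Ω → Fin d → ℝ) (Y : Ω → ℝ)
    (Φ : (Fin d → ℝ) → Fin K → ℝ) (φstar : Fin K → ℝ)
    (w : (Fin d → ℝ) → ℝ) (a0 : ℝ) (a : Fin K → ℝ) (Z : ℝ)
    (hw : ∀ x, w x = Real.exp (a0 + ∑ k, a k * Φ x k))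
    (hw1 : ∫ ω, w (X ω) ∂μ = 1)
    (hwΦ : ∀ k, ∫ ω, w (X ω) * Φ (X ω) k ∂μ = φstar k)
    (hint : ∀ k, Integrable (fun ω => w (X ω) * Φ (X ω) k) μ)
    (hintw : Integrable (fun ω => w (X ω)) μ)
    (hZ : Z = ∫ ω, Real.exp (∑ j, a j * (Φ (X ω) j - φstar j)) ∂μ)
    (πEB : (Fin d → ℝ) → ℝ)
    (hπ : ∀ x, πEB x = Real.exp (∑ j, a j * (Φ x j - φstar j)) / Z) :
    (∀ k, ∫ ω, (Φ (X ω) k - φstar k) *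
        Real.exp (∑ j, a j * (Φ (X ω) j - φstar j)) ∂μ = 0) ∧
    (∀ x, w x = πEB x) ∧
    ∫ ω, πEB (X ω) * Y ω ∂μ = ∫ ω, w (X ω) * Y ω ∂μ :=
  eb_weight_eq_shift_of_loglinear_shift_general μ X Y Φ φstar w a0 a Z hw hw1 hwΦ hint hZ πEB hπ
end

section
/- When the working model is saturated with respect to the constraints, i.e., π(x;α) = exp(c + ξᵀΦ(x)) with α = (c, ξ) of dimension K+1, any solution of the constrained problem has uniform base weights: if q_i = exp(ηᵀh(x_i;α,φ))/Σ_l exp(ηᵀh(x_l;α,φ)) satisfies the K+1 constraints Σ_i q_i h(x_i;α,φ) = 0 and (α, η, φ) is a stationary point of the saddle-point problem with η = 0 feasible, then taking η = 0 gives q_i = 1/n, and the two weight systems coincide: the entropy balancing weights satisfy p̂_i = n^{-1}π(x_i; α̂) where α̂ = (ĉ, λ̂) with λ̂ the entropy balancing dual solution and ĉ chosen so that Σ_i n^{-1}π(x_i;α̂) = 1. -/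
/-!
With `s_i = λ̂ᵀ(Φ(x_i) − φ̂*)`, the exponent of the saturated model is
`ĉ + λ̂ᵀΦ(x_i) = s_i − log(n⁻¹ Σ_l exp s_l)`, so `n⁻¹ π̂(x_i) = exp s_i / Σ_l exp s_l = p̂_i`
exactly. Every `q`-weighted sum of the proposed method is therefore the corresponding
`p̂`-weighted sum, and the constraints become `Σ p̂_i = 1` and the entropy balancing equation.
-/

open Real Finset

section ExponentialWeights

variable {ι : Type*} [Fintype ι] (s : ι → ℝ)

theorem sum_exp_pos [Nonempty ι] : 0 < ∑ i, exp (s i) :=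
  sum_pos (fun i _ => exp_pos (s i)) univ_nonempty

theorem sum_exp_div_sum_exp [Nonempty ι] : ∑ i, exp (s i) / ∑ l, exp (s l) = 1 := by
  rw [← sum_div, div_self (sum_exp_pos s).ne']

theorem sum_exp_div_sum_exp_mul_eq_zero {g : ι → ℝ} (hg : ∑ i, g i * exp (s i) = 0) :
    ∑ i, (exp (s i) / ∑ l, exp (s l)) * g i = 0 := by
  rw [← zero_div (∑ l, exp (s l)), ← hg, sum_div]
  exact sum_congr rfl fun i _ => by ring

theorem inv_card_mul_exp_sub_log_mean_exp [Nonempty ι] (i : ι) :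
    (Fintype.card ι : ℝ)⁻¹ * exp (s i - log ((Fintype.card ι : ℝ)⁻¹ * ∑ l, exp (s l))) =
      exp (s i) / ∑ l, exp (s l) := by
  have hS := sum_exp_pos s
  have hcard : (0 : ℝ) < Fintype.card ι := by exact_mod_cast Fintype.card_pos
  rw [exp_sub, exp_log (by positivity)]
  field_simp

end ExponentialWeights

/-- Saturated working model: when `π(x;α) = exp(c + ξᵀΦ(x))` with `α = (c, ξ)` of
dimension `K+1`, the proposed method with uniform base weights `q_i = 1/n` reproduces
entropy balancing. Precisely, let `λ̂` solve the entropy balancing equation, let `p̂` be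
the EB weights, set `ξ̂ = λ̂` and
`ĉ = −λ̂ᵀφ̂* − log(n⁻¹ Σ_l exp(λ̂ᵀ(Φ(x_l) − φ̂*)))`, and let
`π̂(x) = exp(ĉ + ξ̂ᵀΦ(x))`. Then `p̂_i = n⁻¹ π̂(x_i)` for all `i`; with `q_i = 1/n` the
constraints `Σ_i q_i (π̂(x_i) − 1) = 0` and `Σ_i q_i π̂(x_i)(Φ(x_i) − φ̂*) = 0` hold;
and the two weighted estimators coincide: `Σ_i q_i π̂(x_i) y_i = Σ_i p̂_i y_i` for any
outcomes `y`. -/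
theorem saturated_model_reproduces_entropy_balancing
    {d K n : ℕ} (hn : 0 < n)
    (x : Fin n → Fin d → ℝ) (Φ : (Fin d → ℝ) → Fin K → ℝ)
    (φhat : Fin K → ℝ) (lam : Fin K → ℝ)
    (hbal : ∀ k, ∑ i, (Φ (x i) k - φhat k) *
      Real.exp (∑ j, lam j * (Φ (x i) j - φhat j)) = 0)
    (p : Fin n → ℝ)
    (hp : ∀ i, p i =
      Real.exp (∑ j, lam j * (Φ (x i) j - φhat j)) /
        ∑ l, Real.exp (∑ j, lam j * (Φ (x l) j - φhat j)))
    (c : ℝ)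
    (hc : c = -(∑ j, lam j * φhat j) -
      Real.log ((n : ℝ)⁻¹ * ∑ l, Real.exp (∑ j, lam j * (Φ (x l) j - φhat j))))
    (pihat : (Fin d → ℝ) → ℝ)
    (hpi : ∀ z, pihat z = Real.exp (c + ∑ j, lam j * Φ z j)) :
    (∀ i, p i = (n : ℝ)⁻¹ * pihat (x i)) ∧
    (∑ i, ((n : ℝ)⁻¹) * (pihat (x i) - 1) = 0) ∧
    (∀ k, ∑ i, ((n : ℝ)⁻¹) * (pihat (x i) * (Φ (x i) k - φhat k)) = 0) ∧
    (∀ y : Fin n → ℝ, ∑ i, ((n : ℝ)⁻¹) * pihat (x i) * y i = ∑ i, p i * y i) := by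
  have : Nonempty (Fin n) := Fin.pos_iff_nonempty.mp hn
  set s : Fin n → ℝ := fun i => ∑ j, lam j * (Φ (x i) j - φhat j) with hs
  have hq : ∀ i, (n : ℝ)⁻¹ * pihat (x i) = p i := fun i => by
    have hexponent : c + ∑ j, lam j * Φ (x i) j = s i - log ((n : ℝ)⁻¹ * ∑ l, exp (s l)) := by
      simp only [hc, hs, mul_sub, sum_sub_distrib]
      ring
    simpa [hpi, hexponent, hp, Fintype.card_fin] using inv_card_mul_exp_sub_log_mean_exp s i
  have hp_sum : ∑ i, p i = 1 := by
    simp_rw [hp]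
    exact sum_exp_div_sum_exp s
  refine ⟨fun i => (hq i).symm, ?_, fun k => ?_, fun y => by simp_rw [hq]⟩
  · calc ∑ i, (n : ℝ)⁻¹ * (pihat (x i) - 1) = ∑ i, p i - ∑ _i : Fin n, (n : ℝ)⁻¹ := by
          simp_rw [mul_sub, mul_one, hq, sum_sub_distrib]
      _ = 0 := by
          rw [hp_sum, sum_const, card_univ, Fintype.card_fin, nsmul_eq_mul,
            mul_inv_cancel₀ (by positivity), sub_self]
  · simp_rw [← mul_assoc, hq, hp]
    exact sum_exp_div_sum_exp_mul_eq_zero s (hbal k)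
end
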